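/- Under Condition C, the constant β satisfies (1 − ε_x² ε_θ(σ)²) e^{β(r+1)} Δ ≤ (1 − ε_x^{2Δ} ε_θ(σ)^{2Δ}) e^{2βr} Δ². -/
import Mathlib


/-- Under Condition C, the constant β satisfies
`(1 − ε_x² ε_θ(σ)²) e^{β(r+1)} Δ ≤ (1 − ε_x^{2Δ} ε_θ(σ)^{2Δ}) e^{2βr} Δ²`. -/
theorem stmt_4 (r Δ ΔK : ℕ) (hr : 1 ≤ r) (hΔ : 1 ≤ Δ) (hΔK : 1 ≤ ΔK)
    (εx εθ : ℝ) (hεx : εx ∈ Set.Ioo (0:ℝ) 1) (hεθ : εθ ∈ Set.Ioo (0:ℝ) 1)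
    (hC : εx * εθ > (1 - 1 / (18 * (ΔK:ℝ) * (Δ:ℝ)^2)) ^ ((1:ℝ) / (2*(Δ:ℝ))))
    (β : ℝ)
    (hβ : β = (1 / (2*(r:ℝ))) *
      Real.log (1 / (18 * (ΔK:ℝ) * (Δ:ℝ)^2 * (1 - εx^(2*Δ) * εθ^(2*Δ))))) :
    (1 - εx^2 * εθ^2) * Real.exp (β*((r:ℝ)+1)) * (Δ:ℝ)
      ≤ (1 - εx^(2*Δ) * εθ^(2*Δ)) * Real.exp (2*β*(r:ℝ)) * (Δ:ℝ)^2 := by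
  obtain ⟨hεx0, hεx1⟩ := hεx
  obtain ⟨hεθ0, hεθ1⟩ := hεθ
  set a : ℝ := εx * εθ with ha
  have ha0 : 0 < a := mul_pos hεx0 hεθ0
  have ha1 : a < 1 := by nlinarith
  have hΔR : (1:ℝ) ≤ (Δ:ℝ) := by exact_mod_cast hΔ
  have hΔKR : (1:ℝ) ≤ (ΔK:ℝ) := by exact_mod_cast hΔK
  have hrR : (1:ℝ) ≤ (r:ℝ) := by exact_mod_cast hr
  have hpow : εx^(2*Δ) * εθ^(2*Δ) = a^(2*Δ) := (mul_pow εx εθ (2*Δ)).symm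
  have hpow2 : εx^2 * εθ^2 = a^2 := (mul_pow εx εθ 2).symm
  rw [hpow, hpow2]
  rw [hpow] at hβ
  have hD : (18:ℝ) ≤ 18 * (ΔK:ℝ) * (Δ:ℝ)^2 := by nlinarith
  have hc0 : 0 ≤ 1 - 1/(18 * (ΔK:ℝ) * (Δ:ℝ)^2) := by
    have : 1/(18 * (ΔK:ℝ) * (Δ:ℝ)^2) ≤ 1 := by
      rw [div_le_one (by linarith)]; linarith
    linarith
  -- key: a^(2Δ) > 1 - 1/(18 ΔK Δ²)
  have hkey : 1 - 1/(18 * (ΔK:ℝ) * (Δ:ℝ)^2) < a^(2*Δ) := by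
    have h2Δ : (0:ℝ) < 2*(Δ:ℝ) := by linarith
    have hstep : ((1 - 1/(18 * (ΔK:ℝ) * (Δ:ℝ)^2)) ^ ((1:ℝ)/(2*(Δ:ℝ)))) ^ ((2*(Δ:ℝ)))
        < a ^ ((2*(Δ:ℝ))) := by
      apply Real.rpow_lt_rpow (Real.rpow_nonneg hc0 _) hC h2Δ
    rw [← Real.rpow_natCast a (2*Δ)] at *
    have hcast : ((2*Δ : ℕ) : ℝ) = 2*(Δ:ℝ) := by push_cast; ring
    rw [hcast]
    calc 1 - 1/(18 * (ΔK:ℝ) * (Δ:ℝ)^2)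
        = ((1 - 1/(18 * (ΔK:ℝ) * (Δ:ℝ)^2)) ^ ((1:ℝ)/(2*(Δ:ℝ)))) ^ ((2*(Δ:ℝ))) := by
          rw [← Real.rpow_mul hc0]
          rw [one_div_mul_cancel (ne_of_gt h2Δ), Real.rpow_one]
      _ < a ^ ((2*(Δ:ℝ))) := hstep
  have haΔ1 : a^(2*Δ) < 1 := pow_lt_one₀ ha0.le ha1 (by omega)
  set X : ℝ := 18 * (ΔK:ℝ) * (Δ:ℝ)^2 * (1 - a^(2*Δ)) with hX
  have hX0 : 0 < X := by
    apply mul_pos (by linarith) (by linarith)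
  have hX1 : X < 1 := by
    have h1 : 1 - a^(2*Δ) < 1/(18 * (ΔK:ℝ) * (Δ:ℝ)^2) := by linarith
    have h2 : (0:ℝ) < 18 * (ΔK:ℝ) * (Δ:ℝ)^2 := by linarith
    calc X < 18 * (ΔK:ℝ) * (Δ:ℝ)^2 * (1/(18 * (ΔK:ℝ) * (Δ:ℝ)^2)) :=
          (mul_lt_mul_iff_right₀ h2).mpr h1
      _ = 1 := by field_simp
  have hβ0 : 0 < β := by
    rw [hβ]
    apply mul_pos (by positivity)
    exact Real.log_pos (one_lt_one_div hX0 hX1)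
  have h1 : 1 - a^2 ≤ 1 - a^(2*Δ) := by
    have := pow_le_pow_of_le_one ha0.le ha1.le (show 2 ≤ 2*Δ by omega)
    linarith
  have h2 : Real.exp (β*((r:ℝ)+1)) ≤ Real.exp (2*β*(r:ℝ)) := by
    apply Real.exp_le_exp.mpr
    nlinarith
  have h3 : (Δ:ℝ) ≤ (Δ:ℝ)^2 := by nlinarith
  have hB0 : 0 ≤ 1 - a^(2*Δ) := by linarith
  apply mul_le_mul _ h3 (by linarith) (by positivity)
  exact mul_le_mul h1 h2 (Real.exp_pos _).le hB0
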